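/- Suppose the following deterministic conditions hold: (i) 0.9 Bᵀ Σ_T B ⪯ (1/n_T) Bᵀ X_Tᵀ X_T B ⪯ 1.1 Bᵀ Σ_T B for B = [V̂ −V*], where V̂ ∈ ℝ^{d×q}, V* ∈ ℝ^{d×l}; (ii) Σᵢ ⪰ r Σ_T for all i ∈ [m] with r > 0; (iii) 0.9 Σᵢ ⪯ (1/n_s) Xᵢᵀ Xᵢ ⪯ 1.1 Σᵢ for all i; (iv) for each i, Bᵢ* wᵢ* = V* w̃ᵢ* and B̂ᵢ = V̂ Cᵢ for some matrix Cᵢ; and (v) Σ_{i=1}^m ‖Xᵢ (B̂ᵢ ŵᵢ − Bᵢ* wᵢ*)‖₂² ≤ E. Then there is a universal constant C such that σ_l²(W̃*) · ‖P⊥_{X_T V̂} X_T V*‖_F² ≤ C · (n_T / (r n_s)) · E, where W̃* := [w̃₁*, …, w̃_m*] ∈ ℝ^{l×m}. -/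

import Mathlib

/-!
Write `Δᵢ = B̂ᵢŵᵢ − Bᵢ*wᵢ*`. By (iv), `Δᵢ = V̂ (Cᵢŵᵢ) − V* w̃ᵢ` lies in the range of
`B = [V̂ −V*]`, so the target concentration (i) applies to it; chaining the upper half of (i),
(ii) and the lower half of (iii) gives `‖X_T Δᵢ‖² ≤ (1.1/0.9) (n_T/(r n_s)) ‖Xᵢ Δᵢ‖²`.
Projecting off the column space of `X_T V̂` removes the `V̂` part of `X_T Δᵢ` and does not
increase norms, so `‖P⊥ X_T V* w̃ᵢ‖² ≤ ‖X_T Δᵢ‖²`. Finally, `W̃* W̃*ᵀ ⪰ s I` gives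
`s ‖N‖_F² ≤ ‖N W̃*‖_F² = ∑ᵢ ‖N w̃ᵢ‖²` for `N = P⊥ X_T V*`; summing over `i` and using (v)
yields the claim with `C = 11/9`.
-/

open Matrix

/-- The orthogonal projection matrix onto the column space of `M`,
i.e. `P_M = M (Mᵀ M)† Mᵀ`, characterized as the matrix of the orthogonal
projection of Euclidean space onto the column space of `M`. -/
noncomputable def projMat {a b : ℕ} (M : Matrix (Fin a) (Fin b) ℝ) :
    Matrix (Fin a) (Fin a) ℝ :=
  Matrix.toEuclideanLin.symm
    ((LinearMap.range (Matrix.toEuclideanLin M)).subtype ∘ₗ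
      (Submodule.orthogonalProjectionOnto (LinearMap.range (Matrix.toEuclideanLin M))).toLinearMap)

/-- Squared Frobenius norm of a matrix. -/
def froSq {a b : ℕ} (M : Matrix (Fin a) (Fin b) ℝ) : ℝ := ∑ i, ∑ j, (M i j) ^ 2

section QuadraticForm

variable {n p : Type*} [Fintype n] [Fintype p]

lemma sum_sq_eq_dotProduct_self (v : n → ℝ) : ∑ i, v i ^ 2 = v ⬝ᵥ v := by
  simp only [dotProduct, sq]

lemma dotProduct_mulVec_le_of_posSemidef_sub {A B : Matrix n n ℝ} (h : (A - B).PosSemidef)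
    (x : n → ℝ) : x ⬝ᵥ (B *ᵥ x) ≤ x ⬝ᵥ (A *ᵥ x) := by
  have := h.dotProduct_mulVec_nonneg x
  rwa [star_trivial, sub_mulVec, dotProduct_sub, sub_nonneg] at this

lemma dotProduct_transpose_mul_mul_mulVec (A : Matrix n p ℝ) (M : Matrix n n ℝ) (z : p → ℝ) :
    z ⬝ᵥ ((Aᵀ * M * A) *ᵥ z) = (A *ᵥ z) ⬝ᵥ (M *ᵥ (A *ᵥ z)) := by
  rw [Matrix.mul_assoc, ← mulVec_mulVec, dotProduct_mulVec, vecMul_transpose, mulVec_mulVec]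

lemma dotProduct_transpose_mul_self_mulVec (A : Matrix n p ℝ) (z : p → ℝ) :
    z ⬝ᵥ ((Aᵀ * A) *ᵥ z) = (A *ᵥ z) ⬝ᵥ (A *ᵥ z) := by
  rw [← mulVec_mulVec, dotProduct_mulVec, vecMul_transpose]

end QuadraticForm

section Projection

variable {a b : ℕ}

lemma toEuclideanLin_projMat (M : Matrix (Fin a) (Fin b) ℝ) :
    toEuclideanLin (projMat M) = (LinearMap.range (toEuclideanLin M)).starProjection.toLinearMap :=
  toEuclideanLin.apply_symm_apply _

lemma toEuclideanLin_one_sub_projMat (M : Matrix (Fin a) (Fin b) ℝ) :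
    toEuclideanLin (1 - projMat M) =
      (LinearMap.range (toEuclideanLin M))ᗮ.starProjection.toLinearMap := by
  rw [Submodule.starProjection_orthogonal', map_sub, toEuclideanLin_projMat]
  ext
  simp

lemma projMat_mulVec_mulVec (M : Matrix (Fin a) (Fin b) ℝ) (x : Fin b → ℝ) :
    projMat M *ᵥ (M *ᵥ x) = M *ᵥ x := by
  have hmem : toEuclideanLin M (WithLp.toLp 2 x) ∈ LinearMap.range (toEuclideanLin M) :=
    LinearMap.mem_range_self _ _
  have := congrArg WithLp.ofLp (Submodule.starProjection_eq_self_iff.mpr hmem)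
  rwa [← ContinuousLinearMap.coe_coe, ← toEuclideanLin_projMat] at this

lemma sum_sq_one_sub_projMat_mulVec_le (M : Matrix (Fin a) (Fin b) ℝ) (v : Fin a → ℝ) :
    ∑ j, ((1 - projMat M) *ᵥ v) j ^ 2 ≤ ∑ j, v j ^ 2 := by
  have := (LinearMap.range (toEuclideanLin M))ᗮ.norm_starProjection_apply_le (WithLp.toLp 2 v)
  rw [← ContinuousLinearMap.coe_coe, ← toEuclideanLin_one_sub_projMat] at this
  simpa [EuclideanSpace.norm_sq_eq, sub_mulVec] using pow_le_pow_left₀ (norm_nonneg _) this 2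

lemma sum_sq_one_sub_projMat_mulVec_le_sum_sq_sub (M : Matrix (Fin a) (Fin b) ℝ)
    (x : Fin b → ℝ) (v : Fin a → ℝ) :
    ∑ j, ((1 - projMat M) *ᵥ v) j ^ 2 ≤ ∑ j, (M *ᵥ x - v) j ^ 2 := by
  have hres : (1 - projMat M) *ᵥ v = -((1 - projMat M) *ᵥ (M *ᵥ x - v)) := by
    rw [mulVec_sub, sub_mulVec _ _ (M *ᵥ x), one_mulVec, projMat_mulVec_mulVec]
    abel
  simpa [hres] using sum_sq_one_sub_projMat_mulVec_le M (M *ᵥ x - v)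

end Projection

section Frobenius

variable {a b c : ℕ}

lemma froSq_eq_trace (M : Matrix (Fin a) (Fin b) ℝ) : froSq M = (M * Mᵀ).trace := by
  simp only [froSq, trace, diag, mul_apply, transpose_apply, sq]

lemma mul_froSq_le_froSq_mul {s : ℝ} (N : Matrix (Fin a) (Fin b) ℝ) {W : Matrix (Fin b) (Fin c) ℝ}
    (hW : (W * Wᵀ - s • 1).PosSemidef) : s * froSq N ≤ froSq (N * W) := by
  have := (hW.mul_mul_conjTranspose_same N).trace_nonneg
  rw [conjTranspose_eq_transpose_of_trivial, Matrix.mul_sub, Matrix.sub_mul, trace_sub,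
    sub_nonneg, Matrix.mul_smul, Matrix.mul_one, Matrix.smul_mul, trace_smul] at this
  rwa [froSq_eq_trace, froSq_eq_trace, transpose_mul, ← Matrix.mul_assoc, ← smul_eq_mul,
    Matrix.mul_assoc N W]

lemma froSq_mul_of_eq_sum_sq_mulVec (N : Matrix (Fin a) (Fin b) ℝ) (w : Fin c → Fin b → ℝ) :
    froSq (N * of fun j i => w i j) = ∑ i, ∑ j, (N *ᵥ w i) j ^ 2 := by
  rw [froSq, Finset.sum_comm]
  rfl

end Frobenius

theorem sum_sq_target_le_sum_sq_source {n p ι : Type*} [Fintype n] [Fintype p] [Fintype ι]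
    {nT : ℕ} {XT : Matrix (Fin nT) n ℝ} {X : Matrix ι n ℝ} {ST S : Matrix n n ℝ}
    {B : Matrix n p ℝ} {r ns : ℝ} (hr : 0 < r)
    (hT : ((1.1 : ℝ) • (Bᵀ * ST * B) - (nT : ℝ)⁻¹ • (Bᵀ * XTᵀ * XT * B)).PosSemidef)
    (hdom : (S - r • ST).PosSemidef) (hS : (ns⁻¹ • (Xᵀ * X) - (0.9 : ℝ) • S).PosSemidef)
    (z : p → ℝ) :
    ∑ j, (XT *ᵥ (B *ᵥ z)) j ^ 2 ≤ 11 / 9 * (nT / (r * ns)) * ∑ j, (X *ᵥ (B *ᵥ z)) j ^ 2 := by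
  set v := B *ᵥ z
  have hT' : (nT : ℝ)⁻¹ * ∑ j, (XT *ᵥ v) j ^ 2 ≤ 1.1 * (v ⬝ᵥ (ST *ᵥ v)) := by
    have := dotProduct_mulVec_le_of_posSemidef_sub hT z
    rwa [smul_mulVec, smul_mulVec, dotProduct_smul, dotProduct_smul, Matrix.mul_assoc Bᵀ XTᵀ,
      dotProduct_transpose_mul_mul_mulVec, dotProduct_transpose_mul_mul_mulVec,
      dotProduct_transpose_mul_self_mulVec, ← sum_sq_eq_dotProduct_self] at this
  have hdom' : r * (v ⬝ᵥ (ST *ᵥ v)) ≤ v ⬝ᵥ (S *ᵥ v) := by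
    simpa only [smul_mulVec, dotProduct_smul, smul_eq_mul]
      using dotProduct_mulVec_le_of_posSemidef_sub hdom v
  have hS' : 0.9 * (v ⬝ᵥ (S *ᵥ v)) ≤ ns⁻¹ * ∑ j, (X *ᵥ v) j ^ 2 := by
    simpa only [smul_mulVec, dotProduct_smul, smul_eq_mul, dotProduct_transpose_mul_self_mulVec,
      sum_sq_eq_dotProduct_self] using dotProduct_mulVec_le_of_posSemidef_sub hS v
  rcases Nat.eq_zero_or_pos nT with rfl | hnT
  · simp
  calc ∑ j, (XT *ᵥ v) j ^ 2 = nT * ((nT : ℝ)⁻¹ * ∑ j, (XT *ᵥ v) j ^ 2) := by field_simp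
    _ ≤ nT * (1.1 * (v ⬝ᵥ (ST *ᵥ v))) := by gcongr
    _ = 1.1 * nT / r * (r * (v ⬝ᵥ (ST *ᵥ v))) := by field_simp
    _ ≤ 1.1 * nT / r * (10 / 9 * (ns⁻¹ * ∑ j, (X *ᵥ v) j ^ 2)) := by
      gcongr 1.1 * nT / r * ?_; linarith
    _ = 11 / 9 * (nT / (r * ns)) * ∑ j, (X *ᵥ v) j ^ 2 := by ring

/-- deterministic content of Lemma 3, target training guarantee:
under the stated concentration, dominance, representation and source-error conditions,
`σ_l²(W̃*) ‖P⊥_{X_T V̂} X_T V*‖_F² ≤ C (n_T/(r n_s)) E`. The quantity `σ_l²(W̃*)`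
(the smallest eigenvalue of `W̃*W̃*ᵀ`) is captured by quantifying over all `s ≥ 0` with
`W̃*W̃*ᵀ ⪰ s·I`. -/
theorem stmt14 :
    ∃ C : ℝ, 0 < C ∧
      ∀ (m nT ns d k l q : ℕ)
        (XT : Matrix (Fin nT) (Fin d) ℝ) (X : Fin m → Matrix (Fin ns) (Fin d) ℝ)
        (ST : Matrix (Fin d) (Fin d) ℝ) (S : Fin m → Matrix (Fin d) (Fin d) ℝ)
        (Vhat : Matrix (Fin d) (Fin q) ℝ) (Vstar : Matrix (Fin d) (Fin l) ℝ)
        (Bstar : Fin m → Matrix (Fin d) (Fin k) ℝ) (wstar : Fin m → Fin k → ℝ)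
        (wtil : Fin m → Fin l → ℝ)
        (Bhat : Fin m → Matrix (Fin d) (Fin k) ℝ) (what : Fin m → Fin k → ℝ)
        (r E : ℝ),
        -- (i) two-sided concentration for `B = [V̂ −V*]` on the target data
        (((nT : ℝ)⁻¹ • ((Matrix.fromCols Vhat (-Vstar))ᵀ * XTᵀ * XT *
              Matrix.fromCols Vhat (-Vstar))
            - (0.9 : ℝ) • ((Matrix.fromCols Vhat (-Vstar))ᵀ * ST *
              Matrix.fromCols Vhat (-Vstar))).PosSemidef) →
        (((1.1 : ℝ) • ((Matrix.fromCols Vhat (-Vstar))ᵀ * ST *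
              Matrix.fromCols Vhat (-Vstar))
            - (nT : ℝ)⁻¹ • ((Matrix.fromCols Vhat (-Vstar))ᵀ * XTᵀ * XT *
              Matrix.fromCols Vhat (-Vstar))).PosSemidef) →
        -- (ii) covariance dominance `Σᵢ ⪰ r Σ_T` with `r > 0`
        (0 < r) → (∀ i, (S i - r • ST).PosSemidef) →
        -- (iii) two-sided concentration for the source data
        (∀ i, ((ns : ℝ)⁻¹ • ((X i)ᵀ * X i) - (0.9 : ℝ) • S i).PosSemidef) →
        (∀ i, ((1.1 : ℝ) • S i - (ns : ℝ)⁻¹ • ((X i)ᵀ * X i)).PosSemidef) →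
        -- (iv) representation conditions
        (∀ i, Bstar i *ᵥ wstar i = Vstar *ᵥ wtil i) →
        (∀ i, ∃ Ci : Matrix (Fin q) (Fin k) ℝ, Bhat i = Vhat * Ci) →
        -- (v) source prediction error bound
        (∑ i, ∑ rr, ((X i *ᵥ (Bhat i *ᵥ what i - Bstar i *ᵥ wstar i)) rr) ^ 2 ≤ E) →
        -- conclusion
        ∀ s : ℝ, 0 ≤ s →
          (((Matrix.of fun j i => wtil i j) * (Matrix.of fun j i => wtil i j)ᵀ
              - s • (1 : Matrix (Fin l) (Fin l) ℝ)).PosSemidef) →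
          s * froSq ((1 - projMat (XT * Vhat)) * (XT * Vstar)) ≤
            C * ((nT : ℝ) / (r * ns)) * E := by
  refine ⟨11 / 9, by norm_num, ?_⟩
  intro m nT ns d k l q XT X ST S Vhat Vstar Bstar wstar wtil Bhat what r E
    _ hT hr hdom hS _ hrep hfac hE s _ hW
  choose C hC using hfac
  have hΔ : ∀ i, Bhat i *ᵥ what i - Bstar i *ᵥ wstar i =
      fromCols Vhat (-Vstar) *ᵥ Sum.elim (C i *ᵥ what i) (wtil i) := fun i => by
    rw [fromCols_mulVec_sumElim, hC i, hrep i, ← mulVec_mulVec, neg_mulVec, sub_eq_add_neg]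
  have hXTΔ : ∀ i, XT *ᵥ (Bhat i *ᵥ what i - Bstar i *ᵥ wstar i) =
      (XT * Vhat) *ᵥ (C i *ᵥ what i) - (XT * Vstar) *ᵥ wtil i := fun i => by
    simp only [hC i, hrep i, mulVec_sub, mulVec_mulVec, Matrix.mul_assoc]
  calc s * froSq ((1 - projMat (XT * Vhat)) * (XT * Vstar))
      ≤ froSq ((1 - projMat (XT * Vhat)) * (XT * Vstar) * of fun j i => wtil i j) :=
        mul_froSq_le_froSq_mul _ hW
    _ = ∑ i, ∑ j, ((1 - projMat (XT * Vhat)) *ᵥ ((XT * Vstar) *ᵥ wtil i)) j ^ 2 := by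
        simp only [froSq_mul_of_eq_sum_sq_mulVec, mulVec_mulVec]
    _ ≤ ∑ i, ∑ j, (XT *ᵥ (Bhat i *ᵥ what i - Bstar i *ᵥ wstar i)) j ^ 2 :=
        Finset.sum_le_sum fun i _ => by
          rw [hXTΔ i]; exact sum_sq_one_sub_projMat_mulVec_le_sum_sq_sub _ _ _
    _ ≤ ∑ i, 11 / 9 * (nT / (r * ns)) *
          ∑ j, (X i *ᵥ (Bhat i *ᵥ what i - Bstar i *ᵥ wstar i)) j ^ 2 :=
        Finset.sum_le_sum fun i _ => by
          rw [hΔ i]; exact sum_sq_target_le_sum_sq_source hr hT (hdom i) (hS i) _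
    _ ≤ 11 / 9 * (nT / (r * ns)) * E := by
        rw [← Finset.mul_sum]
        gcongr
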